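/- arXiv:0707.2149 — 2 statements merged into one kernel-verified Lean document; each statement's English description precedes it below -/
import Mathlib

section
/- Let C, D be elements of an associative algebra with ad_C(D) = CD − DC. Then exp(C) · P₁(−ad_C)(D) = P₁(ad_C)(D) · exp(C), where P₁(x) = ∑_{k=0}^∞ x^k/(k+1)!. (In a Banach algebra, or as formal power series.) -/
/-!
Let `L` and `R` be left and right multiplication by `C` on `A`. They commute, `ad_C = L - R`,
`exp L` is left multiplication by `exp C` and `exp R` right multiplication by `exp C`.
Hence `exp L = exp R * exp ad_C`, and the theorem is the one-variable identity
`exp x * P₁ (-x) = P₁ x` (i.e. `e^x (1 - e^{-x}) / x = (e^x - 1) / x`) evaluated at `x = ad_C`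
in the Banach algebra `A →L[ℝ] A` and applied to `D`. The one-variable identity is a Cauchy
product whose coefficients are alternating sums of binomial coefficients.
-/

open NormedSpace Finset
open scoped Nat

theorem sum_range_neg_one_pow_mul_choose_succ (n : ℕ) :
    ∑ j ∈ range (n + 1), (-1 : ℤ) ^ j * ((n + 1).choose (j + 1) : ℤ) = 1 := by
  have h := Int.alternating_sum_range_choose_of_ne (Nat.succ_ne_zero n)
  rw [sum_range_succ'] at h
  simp only [pow_succ, mul_neg_one, neg_mul, sum_neg_distrib, pow_zero, Nat.choose_zero_right,
    Nat.cast_one, one_mul] at h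
  linarith

theorem sum_antidiagonal_inv_factorial_mul_neg_one_pow (n : ℕ) :
    ∑ p ∈ antidiagonal n, ((p.1)! : ℝ)⁻¹ * ((-1) ^ p.2 * ((p.2 + 1)! : ℝ)⁻¹) =
      ((n + 1)! : ℝ)⁻¹ := by
  rw [← Nat.sum_antidiagonal_swap, Nat.sum_antidiagonal_eq_sum_range_succ_mk]
  simp only [Prod.swap_prod_mk]
  have hterm : ∀ j ∈ range (n + 1), ((n - j)! : ℝ)⁻¹ * ((-1) ^ j * ((j + 1)! : ℝ)⁻¹) =
      ((-1 : ℤ) ^ j * ((n + 1).choose (j + 1) : ℤ) : ℤ) * ((n + 1)! : ℝ)⁻¹ := by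
    intro j hj
    push_cast
    rw [Nat.cast_choose ℝ (mem_range.mp hj), show n + 1 - (j + 1) = n - j by omega]
    field_simp
  rw [sum_congr rfl hterm, ← sum_mul, ← Int.cast_sum, sum_range_neg_one_pow_mul_choose_succ,
    Int.cast_one, one_mul]

section P₁

variable {B : Type*} [NormedRing B] [NormedAlgebra ℝ B]

noncomputable def P₁ (x : B) : B := ∑' k : ℕ, ((k + 1)! : ℝ)⁻¹ • x ^ k

theorem summable_norm_P₁_series (x : B) :
    Summable fun k : ℕ => ‖((k + 1)! : ℝ)⁻¹ • x ^ k‖ := by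
  refine (norm_expSeries_summable' (𝕂 := ℝ) x).of_nonneg_of_le (fun _ => norm_nonneg _)
    fun k => ?_
  rw [norm_smul, norm_smul]
  gcongr
  rw [Real.norm_of_nonneg (by positivity), Real.norm_of_nonneg (by positivity)]
  gcongr
  exact k.le_succ

theorem exp_mul_P₁_neg [CompleteSpace B] (x : B) : exp x * P₁ (-x) = P₁ x := by
  rw [P₁, P₁, exp_eq_tsum ℝ, tsum_mul_tsum_eq_tsum_sum_antidiagonal_of_summable_norm
    (norm_expSeries_summable' x) (summable_norm_P₁_series (-x))]
  refine tsum_congr fun n => ?_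
  have hterm : ∀ p ∈ antidiagonal n,
      ((p.1 ! : ℝ)⁻¹ • x ^ p.1) * (((p.2 + 1)! : ℝ)⁻¹ • (-x) ^ p.2) =
        ((p.1 ! : ℝ)⁻¹ * ((-1) ^ p.2 * ((p.2 + 1)! : ℝ)⁻¹)) • x ^ n := by
    rintro ⟨i, j⟩ hij
    rw [HasAntidiagonal.mem_antidiagonal] at hij
    rw [← hij, ← neg_one_smul ℝ x, smul_pow, smul_mul_smul_comm, mul_smul_comm, ← pow_add,
      smul_smul]
    congr 1
    ring
  rw [sum_congr rfl hterm, ← sum_smul, sum_antidiagonal_inv_factorial_mul_neg_one_pow]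

theorem ContinuousLinearMap.P₁_apply {E : Type*} [NormedAddCommGroup E] [NormedSpace ℝ E]
    [CompleteSpace E] (T : E →L[ℝ] E) (y : E) :
    P₁ T y = ∑' k : ℕ, ((k + 1)! : ℝ)⁻¹ • T^[k] y := by
  rw [P₁, ← ContinuousLinearMap.apply_apply (v := y),
    ContinuousLinearMap.map_tsum _ (summable_norm_P₁_series T).of_norm]
  simp

end P₁

theorem ContinuousLinearMap.map_exp_of_map_pow {𝔸 𝔹 : Type*} [NormedRing 𝔸] [NormedAlgebra ℝ 𝔸]
    [CompleteSpace 𝔸] [NormedRing 𝔹] [NormedAlgebra ℝ 𝔹] (Φ : 𝔸 →L[ℝ] 𝔹) {x : 𝔸}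
    (hΦ : ∀ n : ℕ, Φ (x ^ n) = Φ x ^ n) : Φ (exp x) = exp (Φ x) := by
  simp only [exp_eq_tsum ℝ, Φ.map_tsum (expSeries_summable' x), map_smul, hΦ]

section Multiplication

variable {A : Type*} [NormedRing A] [NormedAlgebra ℝ A]

theorem ContinuousLinearMap.mul_pow (x : A) (n : ℕ) :
    ContinuousLinearMap.mul ℝ A (x ^ n) = ContinuousLinearMap.mul ℝ A x ^ n := by
  induction n with
  | zero => ext; simp
  | succ n ih => rw [pow_succ', pow_succ', ← ih]; ext; simp [mul_assoc]

theorem ContinuousLinearMap.mul_flip_pow (x : A) (n : ℕ) :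
    (ContinuousLinearMap.mul ℝ A).flip (x ^ n) = (ContinuousLinearMap.mul ℝ A).flip x ^ n := by
  induction n with
  | zero => ext; simp
  | succ n ih => rw [pow_succ, pow_succ', ← ih]; ext; simp [mul_assoc]

theorem ContinuousLinearMap.commute_mul_mul_flip (x y : A) :
    Commute (ContinuousLinearMap.mul ℝ A x) ((ContinuousLinearMap.mul ℝ A).flip y) := by
  ext; simp [mul_assoc]

end Multiplication

/-- In a Banach algebra, `exp(C) · P₁(−ad_C)(D) = P₁(ad_C)(D) · exp(C)`,
where `P₁(x) = ∑_{k≥0} x^k/(k+1)!` and `ad_C(X) = CX − XC`. -/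
theorem stmt1 {A : Type*} [NormedRing A] [NormedAlgebra ℝ A] [CompleteSpace A] (C D : A) :
    NormedSpace.exp C *
      (∑' k : ℕ, (((k + 1).factorial : ℝ))⁻¹ • ((fun X => -(C * X - X * C))^[k] D)) =
    (∑' k : ℕ, (((k + 1).factorial : ℝ))⁻¹ • ((fun X => C * X - X * C)^[k] D)) *
      NormedSpace.exp C := by
  set L := ContinuousLinearMap.mul ℝ A C
  set R := (ContinuousLinearMap.mul ℝ A).flip C
  -- `exp_add_of_commute` would need a `NormedAlgebra ℚ (A →L[ℝ] A)` instance
  have hexp : exp L = exp R * exp (L - R) := by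
    rw [← exp_add_of_commute_of_mem_ball (𝕂 := ℝ)
      ((ContinuousLinearMap.commute_mul_mul_flip C C).symm.sub_right (Commute.refl R)),
      add_sub_cancel]
    all_goals simp [expSeries_radius_eq_top]
  have key : (exp L * P₁ (-(L - R))) D = (exp R * P₁ (L - R)) D := by
    rw [hexp, mul_assoc, exp_mul_P₁_neg]
  rw [mul_apply_eq_comp, mul_apply_eq_comp,
    ← (ContinuousLinearMap.mul ℝ A).map_exp_of_map_pow (ContinuousLinearMap.mul_pow C),
    ← (ContinuousLinearMap.mul ℝ A).flip.map_exp_of_map_pow (ContinuousLinearMap.mul_flip_pow C),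
    ContinuousLinearMap.P₁_apply, ContinuousLinearMap.P₁_apply] at key
  exact key
end

section
/- For complex x, P₂(x,0) = (1 − e^x + x e^x)/x² and P₂(0,x) = (−1 + e^x − x)/x² (for x ≠ 0), where P₂(x₁,x₂) = ∑_{n₁,n₂ ≥ 0} x₁^{n₁}(x₁+x₂)^{n₂}/(n₁+n₂+2)!. -/
/-!
On the line `x₂ = 0` the summand depends only on `n₁ + n₂`, so grouping the double series
by antidiagonals gives `∑ (n + 1) xⁿ / (n + 2)!`; on the line `x₁ = 0` only the terms with
`n₁ = 0` survive, giving `∑ xⁿ / (n + 2)!`. After multiplying by `x²` both are combinations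
of tails of the exponential series, thanks to `(n + 1) / (n + 2)! = 1 / (n + 1)! - 1 / (n + 2)!`.
-/

open Finset
open scoped Nat

/-- `P₂(x₁,x₂) = ∑_{n₁,n₂ ≥ 0} x₁^{n₁}(x₁+x₂)^{n₂}/(n₁+n₂+2)!`. -/
noncomputable def P2 (x₁ x₂ : ℂ) : ℂ :=
  ∑' n : ℕ × ℕ, (((n.1 + n.2 + 2).factorial : ℂ))⁻¹ * (x₁ ^ n.1 * (x₁ + x₂) ^ n.2)

theorem Summable.tsum_prod_comp_add {α : Type*} [AddCommMonoid α] [TopologicalSpace α]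
    [ContinuousAdd α] [T3Space α] {g : ℕ → α}
    (hg : Summable fun p : ℕ × ℕ => g (p.1 + p.2)) :
    ∑' p : ℕ × ℕ, g (p.1 + p.2) = ∑' n : ℕ, (n + 1) • g n := by
  let e := HasAntidiagonal.sigmaAntidiagonalEquivProd (A := ℕ)
  have he : ∀ c, g ((e c).1 + (e c).2) = g c.1 := fun c =>
    congrArg g (mem_antidiagonal.mp c.2.2)
  have hsum : Summable fun c : Σ n : ℕ, antidiagonal n => g c.1 := by
    simpa only [Function.comp_def, he] using e.summable_iff.mpr hg
  rw [← e.tsum_eq, tsum_congr he, hsum.tsum_sigma' fun n => (hasSum_fintype _).summable]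
  simp [tsum_fintype]

theorem Nat.factorial_mul_factorial_le_factorial_add_add (a b k : ℕ) :
    a ! * b ! ≤ (a + b + k)! :=
  (Nat.le_of_dvd (a + b).factorial_pos (Nat.factorial_mul_factorial_dvd_factorial_add a b)).trans
    (Nat.factorial_le (Nat.le_add_right _ k))

theorem Complex.summable_pow_mul_pow_div_factorial_add (y z : ℂ) (k : ℕ) :
    Summable fun p : ℕ × ℕ => y ^ p.1 * z ^ p.2 / (p.1 + p.2 + k)! := by
  refine Summable.of_norm <| ((Real.summable_pow_div_factorial ‖y‖).mul_of_nonneg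
    (Real.summable_pow_div_factorial ‖z‖) (fun n => by positivity)
    (fun n => by positivity)).of_nonneg_of_le (fun p => norm_nonneg _) fun p => ?_
  rw [norm_div, norm_mul, norm_pow, norm_pow, Complex.norm_natCast, div_mul_div_comm]
  gcongr
  exact_mod_cast Nat.factorial_mul_factorial_le_factorial_add_add p.1 p.2 k

theorem Nat.cast_add_one_div_factorial_add_two {K : Type*} [Field K] [CharZero K] (n : ℕ) :
    ((n : K) + 1) / (n + 2)! = 1 / (n + 1)! - 1 / (n + 2)! := by
  have hn : ((n + 1 + 1 : ℕ) : K) ≠ 0 := Nat.cast_ne_zero.mpr n.succ.succ_ne_zero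
  rw [Nat.factorial_succ (n + 1), Nat.cast_mul]
  field_simp
  push_cast
  ring

theorem Complex.hasSum_pow_div_factorial_nat_add (x : ℂ) (k : ℕ) :
    HasSum (fun n => x ^ (n + k) / (n + k)!) (Complex.exp x - ∑ i ∈ range k, x ^ i / i !) :=
  (hasSum_nat_add_iff' k).2 (Complex.exp_eq_exp_ℂ ▸ NormedSpace.expSeries_div_hasSum_exp x)

theorem P2_zero_left (x : ℂ) : P2 0 x = ∑' n : ℕ, x ^ n / (n + 2)! := by
  rw [P2, ← (Prod.mk_right_injective 0).tsum_eq]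
  · simp [inv_mul_eq_div]
  · rintro ⟨a, b⟩ hab
    obtain rfl : a = 0 := by
      by_contra ha
      exact hab (by simp [zero_pow ha])
    exact ⟨b, rfl⟩

theorem P2_zero_right (x : ℂ) : P2 x 0 = ∑' n : ℕ, (n + 1) * (x ^ n / (n + 2)!) := by
  have hP : P2 x 0 = ∑' p : ℕ × ℕ, x ^ (p.1 + p.2) / (p.1 + p.2 + 2)! := by
    simp [P2, pow_add, inv_mul_eq_div]
  have hsum : Summable fun p : ℕ × ℕ => x ^ (p.1 + p.2) / (p.1 + p.2 + 2)! := by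
    simpa only [pow_add] using Complex.summable_pow_mul_pow_div_factorial_add x x 2
  rw [hP, Summable.tsum_prod_comp_add (g := fun n => x ^ n / (n + 2)!) hsum]
  simp [nsmul_eq_mul]

theorem sq_mul_P2_zero_left (x : ℂ) : x ^ 2 * P2 0 x = -1 + Complex.exp x - x := by
  rw [P2_zero_left, ← tsum_mul_left]
  convert (Complex.hasSum_pow_div_factorial_nat_add x 2).tsum_eq using 1
  · exact tsum_congr fun n => by ring
  · simp only [sum_range_succ, range_one, sum_singleton, pow_zero, pow_one, Nat.factorial_zero,
      Nat.factorial_one, Nat.cast_one, div_one]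
    ring

theorem sq_mul_P2_zero_right (x : ℂ) :
    x ^ 2 * P2 x 0 = 1 - Complex.exp x + x * Complex.exp x := by
  have h1 := (Complex.hasSum_pow_div_factorial_nat_add x 1).mul_left x
  have h2 := Complex.hasSum_pow_div_factorial_nat_add x 2
  rw [P2_zero_right, ← tsum_mul_left]
  convert (h1.sub h2).tsum_eq using 1
  · refine tsum_congr fun n => ?_
    calc x ^ 2 * ((n + 1) * (x ^ n / (n + 2)!))
        = x ^ (n + 2) * ((n + 1) / (n + 2)!) := by ring
      _ = x ^ (n + 2) * (1 / (n + 1)! - 1 / (n + 2)!) := by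
          rw [Nat.cast_add_one_div_factorial_add_two]
      _ = x * (x ^ (n + 1) / (n + 1)!) - x ^ (n + 2) / (n + 2)! := by ring
  · simp only [sum_range_succ, range_one, sum_singleton, pow_zero, pow_one, Nat.factorial_zero,
      Nat.factorial_one, Nat.cast_one, div_one]
    ring

/-- For `x ≠ 0`, `P₂(x,0) = (1 − e^x + x e^x)/x²` and `P₂(0,x) = (−1 + e^x − x)/x²`. -/
theorem stmt5 (x : ℂ) (hx : x ≠ 0) :
    P2 x 0 = (1 - Complex.exp x + x * Complex.exp x) / x ^ 2 ∧
    P2 0 x = (-1 + Complex.exp x - x) / x ^ 2 := by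
  constructor <;> rw [eq_div_iff (pow_ne_zero 2 hx), mul_comm]
  exacts [sq_mul_P2_zero_right x, sq_mul_P2_zero_left x]
end
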